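/- arXiv:2305.01697 — 5 statements merged into one kernel-verified Lean document; each statement's English description precedes it below -/
import Mathlib

section
/- Let G be a solution grid of an n×n Sudoku puzzle P. If for every minimally unavoidable set U of G there exists a cell (i,j) ∈ U given as a clue in P (i.e., P(i,j) ≠ none), then P is a valid puzzle, i.e., G is the unique solution of P. -/
/-- A cell of an `n × n` Sudoku board with `n = s * s`. -/
abbrev SCell (s : ℕ) := Fin (s * s) × Fin (s * s)

/-- `G` is a Sudoku grid: in each row, column and `s × s` aligned subgrid,
each value occurs exactly once (injectivity on finite units of equal size
is equivalent to "exactly once"). -/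
def IsSudoku {s : ℕ} (G : SCell s → Fin (s * s)) : Prop :=
  (∀ c₁ c₂ : SCell s, c₁.1 = c₂.1 → G c₁ = G c₂ → c₁ = c₂) ∧
  (∀ c₁ c₂ : SCell s, c₁.2 = c₂.2 → G c₁ = G c₂ → c₁ = c₂) ∧
  (∀ c₁ c₂ : SCell s, (c₁.1 : ℕ) / s = (c₂.1 : ℕ) / s →
    (c₁.2 : ℕ) / s = (c₂.2 : ℕ) / s → G c₁ = G c₂ → c₁ = c₂)

/-- `U` is an unavoidable set of the grid `G`. -/
def Unavoidable {s : ℕ} (G : SCell s → Fin (s * s)) (U : Set (SCell s)) : Prop :=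
  ∃ G' : SCell s → Fin (s * s), IsSudoku G' ∧ G' ≠ G ∧ ∀ c ∉ U, G' c = G c

/-- `U` is a minimally unavoidable set of the grid `G`. -/
def MinUnavoidable {s : ℕ} (G : SCell s → Fin (s * s)) (U : Set (SCell s)) : Prop :=
  Unavoidable G U ∧ ∀ V ⊂ U, ¬ Unavoidable G V

/-- `G` is a solution of the puzzle `P` (where `none` marks an empty cell). -/
def Solves {s : ℕ} (G : SCell s → Fin (s * s)) (P : SCell s → Option (Fin (s * s))) : Prop :=
  ∀ c v, P c = some v → G c = v

/-- `C` is a valid clue set for the grid `G`: `G` is the unique Sudoku grid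
agreeing with `G` on all cells of `C`. -/
def ValidClueSet {s : ℕ} (G : SCell s → Fin (s * s)) (C : Set (SCell s)) : Prop :=
  ∀ G' : SCell s → Fin (s * s), IsSudoku G' → (∀ c ∈ C, G' c = G c) → G' = G


lemma exists_min_unavoidable {s : ℕ} (G : SCell s → Fin (s * s)) :
    ∀ n (U : Set (SCell s)), U.ncard = n → Unavoidable G U →
      ∃ V, V ⊆ U ∧ MinUnavoidable G V := by
  intro n
  induction n using Nat.strong_induction_on with
  | _ n ih =>
    intro U hcard hU
    by_cases h : ∀ V, V ⊂ U → ¬ Unavoidable G V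
    · exact ⟨U, le_refl _, hU, h⟩
    · push_neg at h
      obtain ⟨V, hVU, hV⟩ := h
      have hUfin : U.Finite := Set.toFinite U
      have hlt : V.ncard < U.ncard := Set.ncard_lt_ncard hVU hUfin
      obtain ⟨W, hWV, hW⟩ := ih V.ncard (hcard ▸ hlt) V rfl hV
      exact ⟨W, hWV.trans hVU.subset, hW⟩

theorem stmt_1 {s : ℕ} (G : SCell s → Fin (s * s)) (P : SCell s → Option (Fin (s * s)))
    (hG : IsSudoku G) (hsol : Solves G P)
    (hhit : ∀ U : Set (SCell s), MinUnavoidable G U → ∃ c ∈ U, P c ≠ none) :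
    ∀ G' : SCell s → Fin (s * s), IsSudoku G' → Solves G' P → G' = G := by
  intro G' hG' hsol'
  by_contra hne
  set U : Set (SCell s) := {c | G' c ≠ G c} with hUdef
  have hU : Unavoidable G U := ⟨G', hG', hne, fun c hc => not_not.mp hc⟩
  obtain ⟨V, hVU, hVmin⟩ := exists_min_unavoidable G U.ncard U rfl hU
  obtain ⟨c, hcV, hcP⟩ := hhit V hVmin
  obtain ⟨v, hv⟩ := Option.ne_none_iff_exists'.mp hcP
  have : G' c = G c := (hsol' c v hv).trans (hsol c v hv).symm
  exact hVU hcV this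
end

section
/- Every unavoidable set of a Sudoku grid has cardinality at least 4. -/
lemma row_aux {s : ℕ} {G G' : SCell s → Fin (s * s)} (hG : IsSudoku G) (hG' : IsSudoku G')
    (i j : Fin (s * s)) (h : G' (i, j) ≠ G (i, j)) :
    ∃ j' : Fin (s * s), j' ≠ j ∧ G' (i, j') ≠ G (i, j') := by
  have hinj : Function.Injective (fun k : Fin (s * s) => G' (i, k)) := by
    intro a b hab
    have := hG'.1 (i, a) (i, b) rfl hab
    exact (Prod.ext_iff.mp this).2
  obtain ⟨j', hj'⟩ := (Finite.injective_iff_surjective.mp hinj) (G (i, j))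
  simp only at hj'
  refine ⟨j', ?_, ?_⟩
  · rintro rfl; exact h hj'
  · intro hc
    have h2 : G (i, j') = G (i, j) := hc ▸ hj'
    have := hG.1 (i, j') (i, j) rfl h2
    have hjj : j' = j := (Prod.ext_iff.mp this).2
    subst hjj; exact h hj'

lemma col_aux {s : ℕ} {G G' : SCell s → Fin (s * s)} (hG : IsSudoku G) (hG' : IsSudoku G')
    (i j : Fin (s * s)) (h : G' (i, j) ≠ G (i, j)) :
    ∃ i' : Fin (s * s), i' ≠ i ∧ G' (i', j) ≠ G (i', j) := by
  have hinj : Function.Injective (fun k : Fin (s * s) => G' (k, j)) := by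
    intro a b hab
    have := hG'.2.1 (a, j) (b, j) rfl hab
    exact (Prod.ext_iff.mp this).1
  obtain ⟨i', hi'⟩ := (Finite.injective_iff_surjective.mp hinj) (G (i, j))
  simp only at hi'
  refine ⟨i', ?_, ?_⟩
  · rintro rfl; exact h hi'
  · intro hc
    have h2 : G (i', j) = G (i, j) := hc ▸ hi'
    have := hG.2.1 (i', j) (i, j) rfl h2
    have hii : i' = i := (Prod.ext_iff.mp this).1
    subst hii; exact h hi'

theorem stmt_6 {s : ℕ} (hs : 2 ≤ s) (G : SCell s → Fin (s * s)) (hG : IsSudoku G)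
    (U : Set (SCell s)) (hU : Unavoidable G U) : 4 ≤ U.ncard := by
  obtain ⟨G', hG', hne, hout⟩ := hU
  obtain ⟨c, hc⟩ := Function.ne_iff.mp hne
  obtain ⟨i, j⟩ := c
  have hmem : ∀ c : SCell s, G' c ≠ G c → c ∈ U := by
    intro c h; by_contra hcU; exact h (hout c hcU)
  obtain ⟨j₂, hj₂, hd₂⟩ := row_aux hG hG' i j hc
  obtain ⟨i₂, hi₂, hd₃⟩ := col_aux hG hG' i j hc
  obtain ⟨j₃, hj₃, hd₄⟩ := row_aux hG hG' i₂ j hd₃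
  have hsub : {((i, j) : SCell s), (i, j₂), (i₂, j), (i₂, j₃)} ⊆ U := by
    intro x hx
    rcases hx with rfl | rfl | rfl | rfl
    · exact hmem _ hc
    · exact hmem _ hd₂
    · exact hmem _ hd₃
    · exact hmem _ hd₄
  refine le_trans ?_ (Set.ncard_le_ncard hsub U.toFinite)
  rw [Set.ncard_insert_of_notMem, Set.ncard_insert_of_notMem,
      Set.ncard_insert_of_notMem, Set.ncard_singleton]
  · intro hx
    simp only [Set.mem_singleton_iff] at hx
    exact hj₃ (Prod.ext_iff.mp hx).2.symm
  · intro hx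
    simp only [Set.mem_insert_iff, Set.mem_singleton_iff] at hx
    rcases hx with h | h
    · exact hi₂ (Prod.ext_iff.mp h).1.symm
    · exact hi₂ (Prod.ext_iff.mp h).1.symm
  · intro hx
    simp only [Set.mem_insert_iff, Set.mem_singleton_iff] at hx
    rcases hx with h | h | h
    · exact hj₂ (Prod.ext_iff.mp h).2.symm
    · exact hi₂ (Prod.ext_iff.mp h).1.symm
    · exact hi₂ (Prod.ext_iff.mp h).1.symm
end

section
/- Let G be a Sudoku grid, r1 ≠ r2 two rows lying in the same band (same block of √n consecutive rows), and c1 ≠ c2 two columns such that G(r1,c1)=G(r2,c2)=a and G(r1,c2)=G(r2,c1)=b with a≠b, and such that (r1,c1),(r2,c1) lie in the same subgrid-column-block and (r1,c2),(r2,c2) lie in the same subgrid-column-block. Then the grid G' obtained from G by swapping values a and b on these four cells is again a valid Sudoku grid, and G' ≠ G. -/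
theorem stmt_8 {s : ℕ} (G : SCell s → Fin (s * s)) (hG : IsSudoku G)
    (r₁ r₂ c₁ c₂ : Fin (s * s)) (hr : r₁ ≠ r₂) (hc : c₁ ≠ c₂)
    (hband : (r₁ : ℕ) / s = (r₂ : ℕ) / s)
    (a b : Fin (s * s)) (hab : a ≠ b)
    (h11 : G (r₁, c₁) = a) (h22 : G (r₂, c₂) = a)
    (h12 : G (r₁, c₂) = b) (h21 : G (r₂, c₁) = b) :
    IsSudoku (fun c : SCell s =>
      if c = (r₁, c₁) ∨ c = (r₂, c₂) then b
      else if c = (r₁, c₂) ∨ c = (r₂, c₁) then a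
      else G c) ∧
    (fun c : SCell s =>
      if c = (r₁, c₁) ∨ c = (r₂, c₂) then b
      else if c = (r₁, c₂) ∨ c = (r₂, c₁) then a
      else G c) ≠ G := by
  obtain ⟨hrow, hcol, hbox⟩ := hG
  have d1 : ((r₁,c₁):SCell s) ≠ (r₁,c₂) := fun h => hc (congrArg Prod.snd h)
  have d2 : ((r₁,c₁):SCell s) ≠ (r₂,c₁) := fun h => hr (congrArg Prod.fst h)
  have d3 : ((r₁,c₁):SCell s) ≠ (r₂,c₂) := fun h => hr (congrArg Prod.fst h)
  have d4 : ((r₁,c₂):SCell s) ≠ (r₂,c₁) := fun h => hr (congrArg Prod.fst h)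
  have d5 : ((r₁,c₂):SCell s) ≠ (r₂,c₂) := fun h => hr (congrArg Prod.fst h)
  have d6 : ((r₂,c₁):SCell s) ≠ (r₂,c₂) := fun h => hc (congrArg Prod.snd h)
  set f : SCell s → Fin (s * s) := fun c =>
      if c = (r₁, c₁) ∨ c = (r₂, c₂) then b
      else if c = (r₁, c₂) ∨ c = (r₂, c₁) then a
      else G c with hf
  set τ : SCell s → SCell s := fun c =>
    if c = (r₁, c₁) then (r₂, c₁)
    else if c = (r₂, c₁) then (r₁, c₁)
    else if c = (r₁, c₂) then (r₂, c₂)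
    else if c = (r₂, c₂) then (r₁, c₂)
    else c with hτ
  set σ : SCell s → SCell s := fun c =>
    if c = (r₁, c₁) then (r₁, c₂)
    else if c = (r₁, c₂) then (r₁, c₁)
    else if c = (r₂, c₁) then (r₂, c₂)
    else if c = (r₂, c₂) then (r₂, c₁)
    else c with hσ
  have hfτ : ∀ c, f c = G (τ c) := by
    intro c
    by_cases e1 : c = (r₁,c₁)
    · subst e1; simp [hf, hτ, d2.symm, h21]
    · by_cases e2 : c = (r₂,c₁)
      · subst e2; simp [hf, hτ, d2.symm, d6, d4.symm, h11, e1]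
      · by_cases e3 : c = (r₁,c₂)
        · subst e3; simp [hf, hτ, d1, d4, d5, h22, e1, e2]
        · by_cases e4 : c = (r₂,c₂)
          · subst e4; simp [hf, hτ, d3.symm, d5.symm, d6.symm, h12, e1, e2, e3]
          · simp [hf, hτ, e1, e2, e3, e4]
  have hfσ : ∀ c, f c = G (σ c) := by
    intro c
    by_cases e1 : c = (r₁,c₁)
    · subst e1; simp [hf, hσ, d1, h12]
    · by_cases e2 : c = (r₁,c₂)
      · subst e2; simp [hf, hσ, d1.symm, d4, d5, h11, e1]
      · by_cases e3 : c = (r₂,c₁)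
        · subst e3; simp [hf, hσ, d2.symm, d4.symm, d6, h22, e1, e2]
        · by_cases e4 : c = (r₂,c₂)
          · subst e4; simp [hf, hσ, d3.symm, d5.symm, d6.symm, h21, e1, e2, e3]
          · simp [hf, hσ, e1, e2, e3, e4]
  have hτinv : ∀ c, τ (τ c) = c := by
    intro c
    by_cases e1 : c = (r₁,c₁)
    · subst e1; simp [hτ, d2.symm, d6, d4.symm]
    · by_cases e2 : c = (r₂,c₁)
      · subst e2; simp [hτ, e1, d2.symm]
      · by_cases e3 : c = (r₁,c₂)
        · subst e3; simp [hτ, e1, e2, d1, d4, d3.symm, d5.symm, d6.symm]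
        · by_cases e4 : c = (r₂,c₂)
          · subst e4
            simp [hτ, e1, e2, e3, d1, d4, d5.symm]
            exact fun h => h.symm
          · simp [hτ, e1, e2, e3, e4]
  have hσinv : ∀ c, σ (σ c) = c := by
    intro c
    by_cases e1 : c = (r₁,c₁)
    · subst e1; simp [hσ, d1, d1.symm, d4]
    · by_cases e2 : c = (r₁,c₂)
      · subst e2; simp [hσ, e1, d1.symm]
      · by_cases e3 : c = (r₂,c₁)
        · subst e3; simp [hσ, e1, e2, d2.symm, d4.symm, d6, d3.symm, d5.symm, d6.symm]
        · by_cases e4 : c = (r₂,c₂)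
          · subst e4; simp [hσ, e1, e2, e3, d2.symm, d4.symm, d6.symm]
          · simp [hσ, e1, e2, e3, e4]
  have hτinj : Function.Injective τ := Function.LeftInverse.injective hτinv
  have hσinj : Function.Injective σ := Function.LeftInverse.injective hσinv
  have hτ2 : ∀ c, (τ c).2 = c.2 := by
    intro c; simp only [hτ]; split_ifs with e1 e2 e3 e4 <;> subst_vars <;> rfl
  have hσ1 : ∀ c, (σ c).1 = c.1 := by
    intro c; simp only [hσ]; split_ifs with e1 e2 e3 e4 <;> subst_vars <;> rfl
  have hτ1 : ∀ c, ((τ c).1 : ℕ) / s = (c.1 : ℕ) / s := by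
    intro c; simp only [hτ]
    split_ifs with e1 e2 e3 e4 <;> subst_vars <;>
      first | rfl | exact hband | exact hband.symm
  refine ⟨⟨?_, ?_, ?_⟩, ?_⟩
  · intro x y h1 h2
    rw [hfσ, hfσ] at h2
    exact hσinj (hrow _ _ (by rw [hσ1, hσ1, h1]) h2)
  · intro x y h1 h2
    rw [hfτ, hfτ] at h2
    exact hτinj (hcol _ _ (by rw [hτ2, hτ2, h1]) h2)
  · intro x y h1 h2 h3
    rw [hfτ, hfτ] at h3
    exact hτinj (hbox _ _ (by rw [hτ1, hτ1, h1]) (by rw [hτ2, hτ2, h2]) h3)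
  · intro h
    have hb : f (r₁, c₁) = b := by simp [hf]
    have h2 := congrFun h (r₁, c₁)
    rw [hb, h11] at h2
    exact hab h2.symm
end

section
/- A Sudoku puzzle P with solution grid G is valid (G is the unique solution) if and only if the set of clue cells of P is a hitting set for the family of all unavoidable sets of G, i.e., every unavoidable set of G contains at least one clue cell of P. -/
theorem stmt_9 {s : ℕ} (G : SCell s → Fin (s * s)) (P : SCell s → Option (Fin (s * s)))
    (hG : IsSudoku G) (hsol : Solves G P) :
    (∀ G' : SCell s → Fin (s * s), IsSudoku G' → Solves G' P → G' = G) ↔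
    (∀ U : Set (SCell s), Unavoidable G U → ∃ c ∈ U, P c ≠ none) := by
  constructor
  · rintro h U ⟨G', hG', hne, hagree⟩
    by_contra hc
    push_neg at hc
    exact hne (h G' hG' (fun c v hv => by
      rw [hagree c (fun hcU => by simp [hc c hcU] at hv)]; exact hsol c v hv))
  · intro h G' hG' hsol'
    by_contra hne
    obtain ⟨c, hcU, hc⟩ := h {c | P c = none}
      ⟨G', hG', hne, fun c hc => by
        obtain ⟨v, hv⟩ := Option.ne_none_iff_exists'.mp hc
        rw [hsol' c v hv, hsol c v hv]⟩
    exact hc hcU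
end

section
/- If U and V are unavoidable sets of a Sudoku grid G witnessed by grids G' and G'' respectively, and the witnessing grids can be chosen with U and V disjoint, then the grid equal to G' on U, G'' on V, and G elsewhere is again a Sudoku grid; hence U ∪ V is unavoidable. (Formally: if U, V are disjoint unavoidable sets of G with witnesses G', G'' differing from G exactly on U and on V, then the combined modification is a Sudoku grid different from G, so U ∪ V is an unavoidable set.) -/
open Function

open Classical in
lemma key_aux {s : ℕ} {β : Type} [Fintype β] (hc : Fintype.card β = s * s)
    (e : β → SCell s) (f g : SCell s → Fin (s * s))
    (hf : Injective (f ∘ e)) (hg : Injective (g ∘ e))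
    (U : Set (SCell s)) (hfg : ∀ b, e b ∉ U → f (e b) = g (e b))
    {b : β} (hb : e b ∈ U) :
    ∃ b', e b' ∈ U ∧ g (e b') = f (e b) := by
  have hcard : Fintype.card β = Fintype.card (Fin (s * s)) := by simp [hc]
  have hsurj : Surjective (g ∘ e) :=
    ((Fintype.bijective_iff_injective_and_card _).2 ⟨hg, hcard⟩).2
  obtain ⟨b', hb'⟩ := hsurj (f (e b))
  by_cases hU : e b' ∈ U
  · exact ⟨b', hU, hb'⟩
  · have h1 : f (e b') = f (e b) := (hfg b' hU).trans hb'
    cases hf h1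
    exact absurd hb hU

open Classical in
lemma mixed_case {s : ℕ} (G G' G'' : SCell s → Fin (s * s))
    (U V : Set (SCell s)) (hdisj : Disjoint U V)
    (hw' : ∀ c ∉ U, G' c = G c) (hw'' : ∀ c ∉ V, G'' c = G c)
    {β : Type} [Fintype β] (hc : Fintype.card β = s * s) (e : β → SCell s)
    (hG : Injective (G ∘ e)) (hG' : Injective (G' ∘ e)) (hG'' : Injective (G'' ∘ e))
    {b₁ b₂ : β} (hb₁ : e b₁ ∈ V) (hb₂ : e b₂ ∈ U)
    (h : G'' (e b₁) = G' (e b₂)) : False := by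
  obtain ⟨b', hb'U, hb'⟩ := key_aux hc e G' G hG' hG U (fun b hb => hw' _ hb) hb₂
  obtain ⟨b'', hb''V, hb''⟩ := key_aux hc e G'' G hG'' hG V (fun b hb => hw'' _ hb) hb₁
  have heq : b'' = b' := hG (show G (e b'') = G (e b') by rw [hb'', hb', h])
  exact Set.disjoint_left.mp hdisj (heq ▸ hb'U) (heq ▸ hb''V)

open Classical in
lemma unit_inj {s : ℕ} (G G' G'' : SCell s → Fin (s * s))
    (U V : Set (SCell s)) (hdisj : Disjoint U V)
    (hw' : ∀ c ∉ U, G' c = G c) (hw'' : ∀ c ∉ V, G'' c = G c)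
    {β : Type} [Fintype β] (hc : Fintype.card β = s * s) (e : β → SCell s)
    (hG : Injective (G ∘ e)) (hG' : Injective (G' ∘ e)) (hG'' : Injective (G'' ∘ e))
    {b₁ b₂ : β}
    (h : (if e b₁ ∈ U then G' (e b₁) else if e b₁ ∈ V then G'' (e b₁) else G (e b₁)) =
         (if e b₂ ∈ U then G' (e b₂) else if e b₂ ∈ V then G'' (e b₂) else G (e b₂))) :
    e b₁ = e b₂ := by
  have hVU : ∀ c, c ∈ V → c ∉ U := fun c hc => Set.disjoint_right.mp hdisj hc
  have FnotV : ∀ c, c ∉ V →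
      (if c ∈ U then G' c else if c ∈ V then G'' c else G c) = G' c := by
    intro c hV
    by_cases hU : c ∈ U <;> simp [hU, hV, hw' c]
  have FnotU : ∀ c, c ∉ U →
      (if c ∈ U then G' c else if c ∈ V then G'' c else G c) = G'' c := by
    intro c hU
    by_cases hV : c ∈ V <;> simp [hU, hV, hw'' c]
  by_cases h1V : e b₁ ∈ V
  · by_cases h2V : e b₂ ∈ V
    · -- both in V, hence both not in U
      have h' : G'' (e b₁) = G'' (e b₂) := by
        rw [← FnotU _ (hVU _ h1V), ← FnotU _ (hVU _ h2V)]; exact h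
      exact congrArg e (hG'' h')
    · by_cases h2U : e b₂ ∈ U
      · -- b₁ in V, b₂ in U : impossible
        have h' : G'' (e b₁) = G' (e b₂) := by
          rw [← FnotU _ (hVU _ h1V), ← FnotV _ h2V]; exact h
        exact absurd (mixed_case G G' G'' U V hdisj hw' hw'' hc e hG hG' hG'' h1V h2U h') id
      · -- b₂ outside both
        have h' : G'' (e b₁) = G'' (e b₂) := by
          rw [← FnotU _ (hVU _ h1V), ← FnotU _ h2U]; exact h
        exact congrArg e (hG'' h')
  · by_cases h2V : e b₂ ∈ V
    · by_cases h1U : e b₁ ∈ U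
      · have h' : G'' (e b₂) = G' (e b₁) := by
          rw [← FnotU _ (hVU _ h2V), ← FnotV _ h1V]; exact h.symm
        exact absurd (mixed_case G G' G'' U V hdisj hw' hw'' hc e hG hG' hG'' h2V h1U h') id
      · have h' : G'' (e b₁) = G'' (e b₂) := by
          rw [← FnotU _ h1U, ← FnotU _ (hVU _ h2V)]; exact h
        exact congrArg e (hG'' h')
    · have h' : G' (e b₁) = G' (e b₂) := by
        rw [← FnotV _ h1V, ← FnotV _ h2V]; exact h
      exact congrArg e (hG' h')


open Classical in
theorem stmt_14 {s : ℕ} (G G' G'' : SCell s → Fin (s * s))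
    (hG : IsSudoku G) (hG' : IsSudoku G') (hG'' : IsSudoku G'')
    (U V : Set (SCell s)) (hdisj : Disjoint U V)
    (hne' : G' ≠ G) (hw' : ∀ c ∉ U, G' c = G c)
    (hne'' : G'' ≠ G) (hw'' : ∀ c ∉ V, G'' c = G c) :
    IsSudoku (fun c : SCell s => if c ∈ U then G' c else if c ∈ V then G'' c else G c) ∧
    (fun c : SCell s => if c ∈ U then G' c else if c ∈ V then G'' c else G c) ≠ G ∧
    Unavoidable G (U ∪ V) := by
  rcases Nat.eq_zero_or_pos s with hs | hs
  · subst hs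
    exact absurd (funext fun c : SCell 0 => absurd c.1.2 (by simp)) hne'
  obtain ⟨hrow, hcol, hbox⟩ := hG
  obtain ⟨hrow', hcol', hbox'⟩ := hG'
  obtain ⟨hrow'', hcol'', hbox''⟩ := hG''
  have hFsud : IsSudoku
      (fun c : SCell s => if c ∈ U then G' c else if c ∈ V then G'' c else G c) := by
    refine ⟨?_, ?_, ?_⟩
    · -- rows
      intro c₁ c₂ hcc h
      obtain ⟨r, x⟩ := c₁
      obtain ⟨r₂, y⟩ := c₂
      cases hcc
      exact unit_inj G G' G'' U V hdisj hw' hw''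
        (Fintype.card_fin (s * s)) (fun z : Fin (s*s) => ((r, z) : SCell s))
        (fun a b hab => (Prod.ext_iff.mp (hrow (r, a) (r, b) rfl hab)).2)
        (fun a b hab => (Prod.ext_iff.mp (hrow' (r, a) (r, b) rfl hab)).2)
        (fun a b hab => (Prod.ext_iff.mp (hrow'' (r, a) (r, b) rfl hab)).2)
        (b₁ := x) (b₂ := y) h
    · -- columns
      intro c₁ c₂ hcc h
      obtain ⟨x, r⟩ := c₁
      obtain ⟨y, r₂⟩ := c₂
      cases hcc
      exact unit_inj G G' G'' U V hdisj hw' hw''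
        (Fintype.card_fin (s * s)) (fun z : Fin (s*s) => ((z, r) : SCell s))
        (fun a b hab => (Prod.ext_iff.mp (hcol (a, r) (b, r) rfl hab)).1)
        (fun a b hab => (Prod.ext_iff.mp (hcol' (a, r) (b, r) rfl hab)).1)
        (fun a b hab => (Prod.ext_iff.mp (hcol'' (a, r) (b, r) rfl hab)).1)
        (b₁ := x) (b₂ := y) h
    · -- boxes
      intro c₁ c₂ h1 h2 h
      have hbnd : ∀ (q : ℕ), q < s → ∀ i : Fin s, q * s + (i : ℕ) < s * s := by
        intro q hq i
        calc q * s + (i : ℕ) < q * s + s := by omega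
          _ = (q + 1) * s := by ring
          _ ≤ s * s := Nat.mul_le_mul_right s hq
      have hq1 : (c₁.1 : ℕ) / s < s := Nat.div_lt_of_lt_mul c₁.1.2
      have hq2 : (c₁.2 : ℕ) / s < s := Nat.div_lt_of_lt_mul c₁.2.2
      set e : Fin s × Fin s → SCell s := fun p =>
        (⟨(c₁.1 : ℕ) / s * s + (p.1 : ℕ), hbnd _ hq1 p.1⟩,
         ⟨(c₁.2 : ℕ) / s * s + (p.2 : ℕ), hbnd _ hq2 p.2⟩) with he
      have hdiv : ∀ (q : ℕ) (i : Fin s), (q * s + (i : ℕ)) / s = q := by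
        intro q i
        rw [add_comm, Nat.add_mul_div_right _ _ hs, Nat.div_eq_of_lt i.2, zero_add]
      have hd1 : ∀ p : Fin s × Fin s, ((e p).1 : ℕ) / s = (c₁.1 : ℕ) / s :=
        fun p => hdiv _ p.1
      have hd2 : ∀ p : Fin s × Fin s, ((e p).2 : ℕ) / s = (c₁.2 : ℕ) / s :=
        fun p => hdiv _ p.2
      have einj : Injective e := by
        intro p p' hpp'
        rw [Prod.ext_iff] at hpp'
        obtain ⟨ha, hb⟩ := hpp'
        rw [Fin.ext_iff] at ha hb
        simp only [he] at ha hb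
        ext
        · omega
        · omega
      have hinj : ∀ H : SCell s → Fin (s * s),
          (∀ d₁ d₂ : SCell s, (d₁.1 : ℕ) / s = (d₂.1 : ℕ) / s →
            (d₁.2 : ℕ) / s = (d₂.2 : ℕ) / s → H d₁ = H d₂ → d₁ = d₂) →
          Injective (H ∘ e) := by
        intro H hH p p' hpp'
        exact einj (hH _ _ ((hd1 p).trans (hd1 p').symm) ((hd2 p).trans (hd2 p').symm) hpp')
      have hc1 : e (⟨(c₁.1 : ℕ) % s, Nat.mod_lt _ hs⟩, ⟨(c₁.2 : ℕ) % s, Nat.mod_lt _ hs⟩)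
          = c₁ := by
        simp only [he]
        ext
        · exact Nat.div_add_mod' (c₁.1 : ℕ) s
        · exact Nat.div_add_mod' (c₁.2 : ℕ) s
      have hc2 : e (⟨(c₂.1 : ℕ) % s, Nat.mod_lt _ hs⟩, ⟨(c₂.2 : ℕ) % s, Nat.mod_lt _ hs⟩)
          = c₂ := by
        simp only [he]
        ext
        · show (c₁.1 : ℕ) / s * s + (c₂.1 : ℕ) % s = (c₂.1 : ℕ)
          rw [h1]; exact Nat.div_add_mod' (c₂.1 : ℕ) s
        · show (c₁.2 : ℕ) / s * s + (c₂.2 : ℕ) % s = (c₂.2 : ℕ)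
          rw [h2]; exact Nat.div_add_mod' (c₂.2 : ℕ) s
      rw [← hc1, ← hc2]
      refine unit_inj G G' G'' U V hdisj hw' hw'' (by simp) e
        (hinj G hbox) (hinj G' hbox') (hinj G'' hbox'') ?_
      rw [hc1, hc2]
      exact h
  have hc0 : ∃ c, G' c ≠ G c := Function.ne_iff.mp hne'
  obtain ⟨c₀, hc₀⟩ := hc0
  have hc₀U : c₀ ∈ U := by
    by_contra hcu
    exact hc₀ (hw' _ hcu)
  have hFne : (fun c : SCell s => if c ∈ U then G' c else if c ∈ V then G'' c else G c) ≠ G := by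
    intro hEq
    apply hc₀
    have := congrFun hEq c₀
    simpa [hc₀U] using this
  refine ⟨hFsud, hFne, ?_⟩
  refine ⟨_, hFsud, hFne, ?_⟩
  intro c hc
  simp only [Set.mem_union, not_or] at hc
  simp [hc.1, hc.2]
end
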